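/- arXiv:2503.04100 — 4 statements merged into one kernel-verified Lean document; each statement's English description precedes it below -/
import Mathlib

section
/- Let F : ℝ → [0,1] be nondecreasing and right-continuous with lim_{x→−∞} F(x) = 0 and lim_{x→+∞} F(x) = 1, and define the generalized inverse F⁻¹(u) = inf{ x ∈ ℝ : F(x) ≥ u } for u ∈ (0,1). Let u_1, …, u_n ∈ (0,1) and set x_i = F⁻¹(u_i) for each i. Then sup_{x∈ℝ} |(1/n)·#{i : x_i ≤ x} − F(x)| ≤ sup_{u∈[0,1]} |(1/n)·#{i : u_i ≤ u} − u|. -/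
open scoped Classical

/-- Quantile transform does not increase the discrepancy: if `x_i = F⁻¹(u_i)` where
`F⁻¹(u) = inf {x : F x ≥ u}` is the generalized inverse of a CDF `F`, then
`sup_x |F_n(x) − F(x)| ≤ sup_u |(1/n)#{i : u_i ≤ u} − u|`. -/
theorem quantile_transform_discrepancy
    (F : ℝ → ℝ) (hF01 : ∀ t, F t ∈ Set.Icc (0 : ℝ) 1)
    (hmono : Monotone F)
    (hrc : ∀ t, ContinuousWithinAt F (Set.Ici t) t)
    (h0 : Filter.Tendsto F Filter.atBot (nhds 0))
    (h1 : Filter.Tendsto F Filter.atTop (nhds 1))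
    (n : ℕ) (hn : 1 ≤ n)
    (u : Fin n → ℝ) (hu : ∀ i, u i ∈ Set.Ioo (0 : ℝ) 1)
    (x : Fin n → ℝ) (hx : ∀ i, x i = sInf {y : ℝ | u i ≤ F y}) :
    (⨆ t : ℝ, |(1 / n : ℝ) * (Finset.univ.filter (fun i => x i ≤ t)).card - F t|)
      ≤ ⨆ v : Set.Icc (0 : ℝ) 1,
          |(1 / n : ℝ) * (Finset.univ.filter (fun i => u i ≤ (v : ℝ))).card - (v : ℝ)| := by
  -- Galois property: x i ≤ t ↔ u i ≤ F t
  have key : ∀ (i : Fin n) (t : ℝ), x i ≤ t ↔ u i ≤ F t := by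
    intro i t
    obtain ⟨hu0, hu1⟩ := hu i
    set S := {y : ℝ | u i ≤ F y} with hSdef
    have hne : S.Nonempty := by
      obtain ⟨y, hy⟩ := (h1.eventually_const_lt hu1).exists
      exact ⟨y, le_of_lt hy⟩
    have hbd : BddBelow S := by
      obtain ⟨z, hz⟩ := (h0.eventually_lt_const hu0).exists
      refine ⟨z, fun y hy => ?_⟩
      by_contra hzy
      push_neg at hzy
      exact absurd (le_trans hy (hmono hzy.le)) (not_le.mpr hz)
    have hsub : S ⊆ Set.Ici (sInf S) := fun y hy => csInf_le hbd hy
    have hmem : u i ≤ F (sInf S) := by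
      have hcl : sInf S ∈ closure S := csInf_mem_closure hne hbd
      have hnb : (nhdsWithin (sInf S) S).NeBot :=
        mem_closure_iff_nhdsWithin_neBot.mp hcl
      have htend : Filter.Tendsto F (nhdsWithin (sInf S) S) (nhds (F (sInf S))) :=
        (hrc (sInf S)).mono_left (nhdsWithin_mono _ hsub)
      exact ge_of_tendsto htend (eventually_nhdsWithin_of_forall fun y hy => hy)
    constructor
    · intro h
      rw [hx i] at h
      exact le_trans hmem (hmono h)
    · intro h
      rw [hx i]
      exact csInf_le hbd h
  have hcard : ∀ t : ℝ, (Finset.univ.filter (fun i => x i ≤ t))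
      = (Finset.univ.filter (fun i => u i ≤ F t)) := by
    intro t
    apply Finset.filter_congr
    intro i _
    simp [key i t]
  -- RHS is bounded above
  have hbddR : BddAbove (Set.range fun v : Set.Icc (0 : ℝ) 1 =>
      |(1 / n : ℝ) * (Finset.univ.filter (fun i => u i ≤ (v : ℝ))).card - (v : ℝ)|) := by
    refine ⟨2, ?_⟩
    rintro _ ⟨v, rfl⟩
    have hcardle : ((Finset.univ.filter (fun i => u i ≤ (v : ℝ))).card : ℝ) ≤ n := by
      have := Finset.card_filter_le Finset.univ (fun i => u i ≤ (v : ℝ))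
      simp only [Finset.card_univ, Fintype.card_fin] at this
      exact_mod_cast this
    have hnpos : (0 : ℝ) < n := by exact_mod_cast hn
    have h1' : (1 / n : ℝ) * (Finset.univ.filter (fun i => u i ≤ (v : ℝ))).card ≤ 1 := by
      rw [one_div, inv_mul_le_iff₀ hnpos, mul_one]
      exact hcardle
    have h0' : (0 : ℝ) ≤ (1 / n : ℝ) * (Finset.univ.filter (fun i => u i ≤ (v : ℝ))).card :=
      mul_nonneg (by positivity) (Nat.cast_nonneg _)
    calc |(1 / n : ℝ) * (Finset.univ.filter (fun i => u i ≤ (v : ℝ))).card - (v : ℝ)|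
        ≤ |(1 / n : ℝ) * (Finset.univ.filter (fun i => u i ≤ (v : ℝ))).card| + |(v : ℝ)| :=
          abs_sub _ _
      _ ≤ 1 + 1 := by
          gcongr
          · rw [abs_of_nonneg h0']; exact h1'
          · rw [abs_of_nonneg v.2.1]; exact v.2.2
      _ = 2 := by norm_num
  refine ciSup_le fun t => ?_
  have heq : |(1 / n : ℝ) * (Finset.univ.filter (fun i => x i ≤ t)).card - F t|
      = |(1 / n : ℝ) * (Finset.univ.filter (fun i => u i ≤ F t)).card - F t| := by
    rw [hcard t]
  rw [heq]
  exact le_ciSup hbddR ⟨F t, hF01 t⟩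
end

section
/- Let n ≥ 1, let x_1, …, x_n ∈ [0,1), and let Y_k = k/n for k = 0, …, n−1. Let I = [a, b) ⊆ [0,1), let c = (a+b)/2, and set I_1 = [a, c), I_2 = [c, b). Define d = sup_{x ∈ [a,b]} (1/n)·|#{i : x_i ∈ [a,x)} − #{k : Y_k ∈ [a,x)}|. If I is equalized, i.e. #{i : x_i ∈ I} = #{k : Y_k ∈ I}, then |#{i : x_i ∈ I_1} − #{i : x_i ∈ I_2}| ≤ 2·n·d + 1. -/
open scoped Classical

/-- Converting the coerced grid filter to a filter over `ℕ`. -/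
lemma grid_coe_card (n : ℕ) (s t : ℝ) :
    ((Finset.range n).filter (fun k => (k : ℝ) / n ∈ Set.Ico s t)).card
      = ((Finset.range n).filter (fun k : ℕ => (k : ℝ) / n ∈ Set.Ico s t)).card := by
  rw [show ((Finset.range n).filter (fun k => (k : ℝ) / n ∈ Set.Ico s t))
      = ((Finset.range n).filter (fun k : ℕ => (k : ℝ) / n ∈ Set.Ico s t)).image
          (fun k : ℕ => (k : ℝ))
      from by ext y; simp; aesop]
  exact Finset.card_image_of_injective _ Nat.cast_injective

/-- The grid filter over `[s,t) ⊆ [0,1]` is an interval of naturals. -/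
lemma grid_filter_eq (n : ℕ) (hn : 0 < n) (s t : ℝ) (ht : t ≤ 1) :
    ((Finset.range n).filter (fun k : ℕ => (k : ℝ) / n ∈ Set.Ico s t)) =
      Finset.Ico (⌈(n : ℝ) * s⌉.toNat) (⌈(n : ℝ) * t⌉.toNat) := by
  have hn' : (0 : ℝ) < n := by exact_mod_cast hn
  ext k
  simp only [Finset.mem_filter, Finset.mem_range, Set.mem_Ico, Finset.mem_Ico]
  constructor
  · rintro ⟨hkn, h1, h2⟩
    have h1' : (n : ℝ) * s ≤ k := by
      rw [le_div_iff₀ hn'] at h1; linarith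
    have h2' : (k : ℝ) < (n : ℝ) * t := by
      rw [div_lt_iff₀ hn'] at h2; linarith
    refine ⟨?_, ?_⟩
    · rw [Int.toNat_le]
      exact Int.ceil_le.2 (by exact_mod_cast h1')
    · rw [Int.lt_toNat]
      exact Int.lt_ceil.2 (by exact_mod_cast h2')
  · rintro ⟨h1, h2⟩
    have h2' : (k : ℝ) < (n : ℝ) * t := by
      have h : (k : ℤ) < ⌈(n : ℝ) * t⌉ := Int.lt_toNat.1 h2
      exact_mod_cast Int.lt_ceil.1 h
    have h1' : (n : ℝ) * s ≤ (k : ℝ) := by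
      have h : (⌈(n : ℝ) * s⌉ : ℤ) ≤ (k : ℤ) := Int.toNat_le.1 h1
      exact_mod_cast Int.ceil_le.1 h
    have hkn : k < n := by
      have : (k : ℝ) < n := lt_of_lt_of_le h2' (by nlinarith)
      exact_mod_cast this
    exact ⟨hkn, by rw [le_div_iff₀ hn']; linarith, by rw [div_lt_iff₀ hn']; linarith⟩

/-- If a dyadic interval `I = [a,b)` is equalized with respect to the sample and the
uniform grid `k/n`, then the imbalance between its two halves is at most `2·n·d_Y(I) + 1`,
where `d_Y(I)` is the local discrepancy of `I`. -/
theorem half_imbalance_le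
    (n : ℕ) (hn : 1 ≤ n) (x : Fin n → ℝ) (hx : ∀ i, x i ∈ Set.Ico (0 : ℝ) 1)
    (a b : ℝ) (ha : 0 ≤ a) (hab : a ≤ b) (hb : b ≤ 1)
    (d : ℝ)
    (hd : d = ⨆ u : Set.Icc a b, (1 / n : ℝ) *
      |((Finset.univ.filter (fun i => x i ∈ Set.Ico a (u : ℝ))).card : ℝ) -
        ((Finset.range n).filter (fun k => (k : ℝ) / n ∈ Set.Ico a (u : ℝ))).card|)
    (hequal : (Finset.univ.filter (fun i => x i ∈ Set.Ico a b)).card =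
      ((Finset.range n).filter (fun k => (k : ℝ) / n ∈ Set.Ico a b)).card) :
    |((Finset.univ.filter (fun i => x i ∈ Set.Ico a ((a + b) / 2))).card : ℝ) -
      ((Finset.univ.filter (fun i => x i ∈ Set.Ico ((a + b) / 2) b)).card : ℝ)|
      ≤ 2 * n * d + 1 := by
  have hn0 : 0 < n := hn
  have hn' : (0 : ℝ) < n := by exact_mod_cast hn0
  set c : ℝ := (a + b) / 2 with hc
  have hac : a ≤ c := by rw [hc]; linarith
  have hcb : c ≤ b := by rw [hc]; linarith
  have hc1 : c ≤ 1 := le_trans hcb hb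
  set A1 := (Finset.univ.filter (fun i => x i ∈ Set.Ico a c)).card with hA1def
  set A2 := (Finset.univ.filter (fun i => x i ∈ Set.Ico c b)).card with hA2def
  set G1 := ((Finset.range n).filter (fun k : ℕ => (k : ℝ) / n ∈ Set.Ico a c)).card with hG1def
  set G2 := ((Finset.range n).filter (fun k : ℕ => (k : ℝ) / n ∈ Set.Ico c b)).card with hG2def
  -- splitting of cardinalities
  have splitx : (Finset.univ.filter (fun i => x i ∈ Set.Ico a b)).card = A1 + A2 := by
    rw [hA1def, hA2def, ← Finset.card_union_of_disjoint, ← Finset.filter_or]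
    · congr 1
      apply Finset.filter_congr
      intro i _
      simp only [Set.mem_Ico, eq_iff_iff]
      constructor
      · rintro ⟨h1, h2⟩
        rcases lt_or_ge (x i) c with h | h
        · exact Or.inl ⟨h1, h⟩
        · exact Or.inr ⟨h, h2⟩
      · rintro (⟨h1, h2⟩ | ⟨h1, h2⟩)
        · exact ⟨h1, lt_of_lt_of_le h2 hcb⟩
        · exact ⟨le_trans hac h1, h2⟩
    · rw [Finset.disjoint_filter]
      rintro i _ ⟨_, h2⟩ ⟨h3, _⟩
      exact absurd h3 (not_le.2 h2)
  have splitg : ((Finset.range n).filter (fun k : ℕ => (k : ℝ) / n ∈ Set.Ico a b)).card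
      = G1 + G2 := by
    rw [hG1def, hG2def, ← Finset.card_union_of_disjoint, ← Finset.filter_or]
    · congr 1
      apply Finset.filter_congr
      intro k _
      simp only [Set.mem_Ico, eq_iff_iff]
      constructor
      · rintro ⟨h1, h2⟩
        rcases lt_or_ge ((k : ℝ) / n) c with h | h
        · exact Or.inl ⟨h1, h⟩
        · exact Or.inr ⟨h, h2⟩
      · rintro (⟨h1, h2⟩ | ⟨h1, h2⟩)
        · exact ⟨h1, lt_of_lt_of_le h2 hcb⟩
        · exact ⟨le_trans hac h1, h2⟩
    · rw [Finset.disjoint_filter]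
      rintro k _ ⟨_, h2⟩ ⟨h3, _⟩
      exact absurd h3 (not_le.2 h2)
  have hsum : A1 + A2 = G1 + G2 := by
    rw [← splitx, hequal, grid_coe_card n a b, splitg]
  -- the sup is bounded above
  have hbdd : BddAbove (Set.range fun u : Set.Icc a b => (1 / n : ℝ) *
      |((Finset.univ.filter (fun i => x i ∈ Set.Ico a (u : ℝ))).card : ℝ) -
        ((Finset.range n).filter (fun k => (k : ℝ) / n ∈ Set.Ico a (u : ℝ))).card|) := by
    refine ⟨1, ?_⟩
    rintro y ⟨u, rfl⟩
    have h1 : ((Finset.univ.filter (fun i => x i ∈ Set.Ico a (u : ℝ))).card : ℝ) ≤ n := by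
      have h := Finset.card_filter_le (Finset.univ : Finset (Fin n))
        (fun i => x i ∈ Set.Ico a (u : ℝ))
      simp only [Finset.card_univ, Fintype.card_fin] at h
      exact_mod_cast h
    have h2 : (((Finset.range n).filter
        (fun k => (k : ℝ) / n ∈ Set.Ico a (u : ℝ))).card : ℝ) ≤ n := by
      rw [grid_coe_card n a (u : ℝ)]
      have h := Finset.card_filter_le (Finset.range n)
        (fun k : ℕ => (k : ℝ) / n ∈ Set.Ico a (u : ℝ))
      simp only [Finset.card_range] at h
      exact_mod_cast h
    have h3 : (0 : ℝ) ≤ ((Finset.univ.filter (fun i => x i ∈ Set.Ico a (u : ℝ))).card : ℝ) :=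
      Nat.cast_nonneg _
    have h4 : (0 : ℝ) ≤ (((Finset.range n).filter
        (fun k => (k : ℝ) / n ∈ Set.Ico a (u : ℝ))).card : ℝ) := Nat.cast_nonneg _
    have habs : |((Finset.univ.filter (fun i => x i ∈ Set.Ico a (u : ℝ))).card : ℝ) -
        ((Finset.range n).filter (fun k => (k : ℝ) / n ∈ Set.Ico a (u : ℝ))).card| ≤ n := by
      rw [abs_sub_le_iff]; constructor <;> linarith
    calc (1 / n : ℝ) * |((Finset.univ.filter (fun i => x i ∈ Set.Ico a (u : ℝ))).card : ℝ) -
        ((Finset.range n).filter (fun k => (k : ℝ) / n ∈ Set.Ico a (u : ℝ))).card|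
        ≤ (1 / n : ℝ) * n := by
          apply mul_le_mul_of_nonneg_left habs
          positivity
      _ = 1 := by field_simp
  -- evaluating the sup at u = c
  have hdc : (1 / n : ℝ) * |(A1 : ℝ) - (G1 : ℝ)| ≤ d := by
    rw [hd]
    have h := le_ciSup hbdd (⟨c, hac, hcb⟩ : Set.Icc a b)
    rw [show (((⟨c, hac, hcb⟩ : Set.Icc a b) : ℝ)) = c from rfl] at h
    rw [grid_coe_card n a c] at h
    exact h
  have hA1G1 : |(A1 : ℝ) - (G1 : ℝ)| ≤ n * d := by
    have h := mul_le_mul_of_nonneg_left hdc (le_of_lt hn')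
    calc |(A1 : ℝ) - (G1 : ℝ)| = (n : ℝ) * ((1 / n : ℝ) * |(A1 : ℝ) - (G1 : ℝ)|) := by
          field_simp
      _ ≤ (n : ℝ) * d := h
  -- grid regularity : |G1 - G2| ≤ 1
  set e1 : ℤ := ⌈(n : ℝ) * a⌉ with he1
  set e2 : ℤ := ⌈(n : ℝ) * c⌉ with he2
  set e3 : ℤ := ⌈(n : ℝ) * b⌉ with he3
  have he1nn : 0 ≤ e1 := Int.ceil_nonneg (by positivity)
  have he12 : e1 ≤ e2 := Int.ceil_le_ceil (by nlinarith)
  have he23 : e2 ≤ e3 := Int.ceil_le_ceil (by nlinarith)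
  have hG1card : G1 = e2.toNat - e1.toNat := by
    rw [hG1def, grid_filter_eq n hn0 a c hc1, Nat.card_Ico]
  have hG2card : G2 = e3.toNat - e2.toNat := by
    rw [hG2def, grid_filter_eq n hn0 c b hb, Nat.card_Ico]
  have hG1z : (G1 : ℤ) = e2 - e1 := by omega
  have hG2z : (G2 : ℤ) = e3 - e2 := by omega
  have hceil2l : (n : ℝ) * c ≤ (e2 : ℝ) := Int.le_ceil _
  have hceil2u : (e2 : ℝ) < (n : ℝ) * c + 1 := Int.ceil_lt_add_one _
  have hceil1l : (n : ℝ) * a ≤ (e1 : ℝ) := Int.le_ceil _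
  have hceil1u : (e1 : ℝ) < (n : ℝ) * a + 1 := Int.ceil_lt_add_one _
  have hceil3l : (n : ℝ) * b ≤ (e3 : ℝ) := Int.le_ceil _
  have hceil3u : (e3 : ℝ) < (n : ℝ) * b + 1 := Int.ceil_lt_add_one _
  have hmid : (n : ℝ) * c * 2 = (n : ℝ) * a + (n : ℝ) * b := by rw [hc]; ring
  have hgz : |2 * e2 - e1 - e3| ≤ 1 := by
    have hlt : ((2 * e2 - e1 - e3 : ℤ) : ℝ) < 2 := by push_cast; linarith
    have hgt : (-2 : ℝ) < ((2 * e2 - e1 - e3 : ℤ) : ℝ) := by push_cast; linarith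
    have hlt' : (2 * e2 - e1 - e3 : ℤ) < 2 := by exact_mod_cast hlt
    have hgt' : (-2 : ℤ) < (2 * e2 - e1 - e3 : ℤ) := by exact_mod_cast hgt
    rw [abs_le]
    omega
  have hG12 : |(G1 : ℝ) - (G2 : ℝ)| ≤ 1 := by
    have heq : ((G1 : ℤ) - (G2 : ℤ) : ℤ) = 2 * e2 - e1 - e3 := by
      rw [hG1z, hG2z]; ring
    have h : |((G1 : ℤ) - (G2 : ℤ))| ≤ 1 := by rw [heq]; exact hgz
    have h' : |(((G1 : ℤ) - (G2 : ℤ) : ℤ) : ℝ)| ≤ 1 := by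
      rw [← Int.cast_abs]; exact_mod_cast h
    push_cast at h'
    exact h'
  -- conclusion
  have hsumR : (A1 : ℝ) + A2 = (G1 : ℝ) + G2 := by exact_mod_cast hsum
  have h1 := abs_le.1 hA1G1
  have h2 := abs_le.1 hG12
  rw [abs_le]
  constructor <;> [linarith; linarith]
end

section
/- Let n ≥ 1, let x_1, …, x_n ∈ [0,1), and let Y_k = k/n for k = 0, …, n−1. Let I = [a, b) ⊆ [0,1) be equalized, i.e. #{i : x_i ∈ I} = #{k : Y_k ∈ I}. Then the local discrepancy satisfies d_Y(I) ≤ (b − a) + 1/n. In particular, if m > 0 satisfies b − a ≤ 1/(2m) and n ≥ 2m, then d_Y(I) ≤ 1/m. -/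
open scoped Classical

/-- Cards of filters over the coerced range agree with cards over the natural range. -/
lemma card_coe_filter (n : ℕ) (p : ℝ → Prop) [DecidablePred p]
    [DecidablePred (fun k : ℕ => p ((k : ℝ)))] :
    ((Finset.range n).filter (fun k => p ((k : ℝ))) : Finset ℝ).card
    = ((Finset.range n).filter (fun k : ℕ => p ((k : ℝ))) : Finset ℕ).card := by
  rw [show ((Finset.range n : Finset ℝ)) = (Finset.range n).image (Nat.cast : ℕ → ℝ) by
    simp [Finset.image]]
  rw [Finset.filter_image, Finset.card_image_of_injective _ Nat.cast_injective]
  congr 1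
  apply Finset.filter_congr_decidable

/-- Counting lemma: the number of grid points `k/n`, `k < n`, lying in `[c,d)`
(with `0 ≤ c ≤ d`) is at most `n·(d−c) + 1`. -/
lemma grid_count_le (n : ℕ) (hn : 1 ≤ n) (c d : ℝ) (hc : 0 ≤ c) (hcd : c ≤ d) :
    (((Finset.range n).filter (fun k : ℕ => (k : ℝ) / n ∈ Set.Ico c d)).card : ℝ) ≤
      n * (d - c) + 1 := by
  have hn0 : (0 : ℝ) < n := by exact_mod_cast hn
  have hsub : (Finset.range n).filter (fun k : ℕ => (k : ℝ) / n ∈ Set.Ico c d) ⊆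
      Finset.Ico ⌈n * c⌉₊ ⌈n * d⌉₊ := by
    intro k hk
    simp only [Finset.mem_filter, Finset.mem_range, Set.mem_Ico] at hk
    obtain ⟨-, h1, h2⟩ := hk
    have hk1 : n * c ≤ (k : ℝ) := by
      rw [le_div_iff₀ hn0] at h1; linarith [h1]
    have hk2 : (k : ℝ) < n * d := by
      rw [div_lt_iff₀ hn0] at h2; linarith [h2]
    simp only [Finset.mem_Ico]
    constructor
    · exact Nat.ceil_le.mpr hk1
    · have : (k : ℝ) < (⌈n * d⌉₊ : ℝ) := lt_of_lt_of_le hk2 (Nat.le_ceil _)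
      exact_mod_cast this
  have hcard := Finset.card_le_card hsub
  rw [Nat.card_Ico] at hcard
  have h0 : 0 ≤ n * (d - c) := by
    have := sub_nonneg.mpr hcd; positivity
  rcases Nat.lt_or_ge ⌈n * d⌉₊ ⌈n * c⌉₊ with h | h
  · have : ((Finset.range n).filter (fun k : ℕ => (k : ℝ) / n ∈ Set.Ico c d)).card = 0 := by
      omega
    rw [this]; push_cast; linarith
  · have h1 : (⌈n * d⌉₊ : ℝ) < n * d + 1 := by
      apply Nat.ceil_lt_add_one
      have : 0 ≤ n * c := by positivity
      nlinarith
    have h2 : n * c ≤ (⌈n * c⌉₊ : ℝ) := Nat.le_ceil _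
    have hcard' : (((Finset.range n).filter (fun k : ℕ => (k : ℝ) / n ∈ Set.Ico c d)).card : ℝ)
        ≤ (⌈n * d⌉₊ : ℝ) - (⌈n * c⌉₊ : ℝ) := by
      have hle : ((Finset.range n).filter (fun k : ℕ => (k : ℝ) / n ∈ Set.Ico c d)).card
          + ⌈n * c⌉₊ ≤ ⌈n * d⌉₊ := by omega
      have := (Nat.cast_le (α := ℝ)).mpr hle
      push_cast at this
      linarith
    linarith

/-- An equalized interval `I = [a,b)` has local discrepancy at most `(b − a) + 1/n`.
In particular, if `b − a ≤ 1/(2m)` and `n ≥ 2m`, then `d_Y(I) ≤ 1/m`. -/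
theorem equalized_local_discrepancy
    (n : ℕ) (hn : 1 ≤ n) (x : Fin n → ℝ) (hx : ∀ i, x i ∈ Set.Ico (0 : ℝ) 1)
    (a b : ℝ) (ha : 0 ≤ a) (hab : a ≤ b) (hb : b ≤ 1)
    (d : ℝ)
    (hd : d = ⨆ u : Set.Icc a b, (1 / n : ℝ) *
      |((Finset.univ.filter (fun i => x i ∈ Set.Ico a (u : ℝ))).card : ℝ) -
        ((Finset.range n).filter (fun k => (k : ℝ) / n ∈ Set.Ico a (u : ℝ))).card|)
    (hequal : (Finset.univ.filter (fun i => x i ∈ Set.Ico a b)).card =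
      ((Finset.range n).filter (fun k => (k : ℝ) / n ∈ Set.Ico a b)).card) :
    d ≤ (b - a) + 1 / n ∧
      ∀ m : ℝ, 0 < m → b - a ≤ 1 / (2 * m) → 2 * m ≤ n → d ≤ 1 / m := by
  have hn0 : (0 : ℝ) < n := by exact_mod_cast hn
  have hne : Nonempty (Set.Icc a b) := (Set.nonempty_Icc.mpr hab).to_subtype
  rw [card_coe_filter n (fun y => y / n ∈ Set.Ico a b)] at hequal
  have hmain : d ≤ (b - a) + 1 / n := by
    rw [hd]
    apply ciSup_le
    rintro ⟨u, hu1, hu2⟩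
    rw [card_coe_filter n (fun y => y / n ∈ Set.Ico a u)]
    -- notation
    set A : ℝ := ((Finset.univ.filter (fun i => x i ∈ Set.Ico a u)).card : ℝ) with hA
    set B : ℝ := (((Finset.range n).filter (fun k : ℕ => (k : ℝ) / n ∈ Set.Ico a u)).card : ℝ)
      with hB
    set Ab : ℝ := ((Finset.univ.filter (fun i => x i ∈ Set.Ico a b)).card : ℝ) with hAb
    set Bb : ℝ :=
      (((Finset.range n).filter (fun k : ℕ => (k : ℝ) / n ∈ Set.Ico a b)).card : ℝ) with hBb
    set C : ℝ :=
      (((Finset.range n).filter (fun k : ℕ => (k : ℝ) / n ∈ Set.Ico u b)).card : ℝ) with hC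
    -- A ≤ Ab
    have hAAb : A ≤ Ab := by
      apply Nat.cast_le.mpr
      apply Finset.card_le_card
      intro i hi
      simp only [Finset.mem_filter, Set.mem_Ico] at hi ⊢
      exact ⟨hi.1, hi.2.1, lt_of_lt_of_le hi.2.2 hu2⟩
    -- Bb = B + C
    have hsplit : Bb = B + C := by
      have hcongr : (Finset.range n).filter (fun k : ℕ => (k : ℝ) / n ∈ Set.Ico a b) =
          ((Finset.range n).filter (fun k : ℕ => (k : ℝ) / n ∈ Set.Ico a u)) ∪
          ((Finset.range n).filter (fun k : ℕ => (k : ℝ) / n ∈ Set.Ico u b)) := by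
        rw [← Finset.filter_or]
        apply Finset.filter_congr
        intro k _
        simp only [Set.mem_Ico]
        constructor
        · rintro ⟨h1, h2⟩
          rcases lt_or_ge ((k : ℝ) / n) u with h | h
          · exact Or.inl ⟨h1, h⟩
          · exact Or.inr ⟨h, h2⟩
        · rintro (⟨h1, h2⟩ | ⟨h1, h2⟩)
          · exact ⟨h1, lt_of_lt_of_le h2 hu2⟩
          · exact ⟨le_trans hu1 h1, h2⟩
      have hdisj : Disjoint
          ((Finset.range n).filter (fun k : ℕ => (k : ℝ) / n ∈ Set.Ico a u))
          ((Finset.range n).filter (fun k : ℕ => (k : ℝ) / n ∈ Set.Ico u b)) := by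
        rw [Finset.disjoint_filter]
        intro k _ h1 h2
        simp only [Set.mem_Ico] at h1 h2
        exact absurd h1.2 (not_lt.mpr h2.1)
      rw [hBb, hB, hC, hcongr, Finset.card_union_of_disjoint hdisj]
      push_cast; ring
    have hAbBb : Ab = Bb := by rw [hAb, hBb]; exact_mod_cast hequal
    -- bounds
    have hB0 : 0 ≤ B := Nat.cast_nonneg _
    have hA0 : 0 ≤ A := Nat.cast_nonneg _
    have hBle : B ≤ n * (u - a) + 1 := grid_count_le n hn a u ha hu1
    have hCle : C ≤ n * (b - u) + 1 := grid_count_le n hn u b (le_trans ha hu1) hu2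
    have habs : |A - B| ≤ n * (b - a) + 1 := by
      rw [abs_le]
      constructor
      · nlinarith
      · nlinarith
    rw [div_mul_eq_mul_div, one_mul, div_le_iff₀ hn0]
    calc |A - B| ≤ n * (b - a) + 1 := habs
      _ = ((b - a) + 1 / n) * n := by field_simp
  refine ⟨hmain, fun m hm h1 h2 => ?_⟩
  have h2m : (0 : ℝ) < 2 * m := by linarith
  have hdiv : 1 / (n : ℝ) ≤ 1 / (2 * m) := one_div_le_one_div_of_le h2m h2
  have heq : 1 / (2 * m) + 1 / (2 * m) = 1 / m := by
    rw [div_add_div _ _ (ne_of_gt h2m) (ne_of_gt h2m)]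
    rw [div_eq_div_iff (by positivity) (ne_of_gt hm)]
    ring
  calc d ≤ (b - a) + 1 / n := hmain
    _ ≤ 1 / (2 * m) + 1 / (2 * m) := by linarith
    _ = 1 / m := heq
end

section
/- Let n ≥ 1 and k ≥ 1 be integers and partition [0,1) into the intervals I_j = [(j−1)/k, j/k) for j = 1, …, k. Let x_1, …, x_n ∈ [0,1) and let S = { j : #{i : x_i ∈ I_j} > n/k + √(n/k) } be the set of indices of dense intervals. Suppose x̃_1, …, x̃_n ∈ [0,1] satisfy sup_{x∈[0,1]} |(1/n)·#{i : x̃_i ≤ x} − x| < 1/(4·√(n·k)). Then #{i : x_i ≠ x̃_i} ≥ (1/2)·√(n/k)·#S. -/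
open scoped Classical

set_option maxHeartbeats 1000000 in
/-- If the modified sample `x̃` has discrepancy less than `1/(4√(nk))`, then the number of
modified points is at least `(1/2)·√(n/k)` times the number of dense intervals of the
original sample. -/
theorem moves_from_dense_intervals
    (n k : ℕ) (hn : 1 ≤ n) (hk : 1 ≤ k)
    (x : Fin n → ℝ) (hx : ∀ i, x i ∈ Set.Ico (0 : ℝ) 1)
    (xt : Fin n → ℝ) (hxt : ∀ i, xt i ∈ Set.Icc (0 : ℝ) 1)
    (S : Finset (Fin k))
    (hS : S = Finset.univ.filter (fun j : Fin k =>
      (n : ℝ) / k + Real.sqrt ((n : ℝ) / k) <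
        ((Finset.univ.filter (fun i =>
          x i ∈ Set.Ico ((j : ℝ) / k) (((j : ℝ) + 1) / k))).card : ℝ)))
    (hdisc : (⨆ t : Set.Icc (0 : ℝ) 1,
        |(1 / n : ℝ) * (Finset.univ.filter (fun i => xt i ≤ (t : ℝ))).card - (t : ℝ)|)
      < 1 / (4 * Real.sqrt ((n : ℝ) * k))) :
    (1 / 2 : ℝ) * Real.sqrt ((n : ℝ) / k) * S.card ≤
      ((Finset.univ.filter (fun i => x i ≠ xt i)).card : ℝ) := by
  have hn0 : (0:ℝ) < n := by exact_mod_cast hn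
  have hk0 : (0:ℝ) < k := by exact_mod_cast hk
  set ε : ℝ := 1 / (4 * Real.sqrt ((n : ℝ) * k)) with hεdef
  have hε0 : 0 < ε := by
    have : 0 < Real.sqrt ((n:ℝ)*k) := Real.sqrt_pos.2 (by positivity)
    positivity
  have hsq0 : (0:ℝ) ≤ Real.sqrt ((n:ℝ)/k) := Real.sqrt_nonneg _
  -- key identity: 2*n*ε = sqrt(n/k)/2
  have h2ne : 2 * (n:ℝ) * ε = Real.sqrt ((n:ℝ)/k) / 2 := by
    have hsk : Real.sqrt ((n:ℝ)*k) = Real.sqrt n * Real.sqrt k :=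
      Real.sqrt_mul (le_of_lt hn0) _
    have hsd : Real.sqrt ((n:ℝ)/k) = Real.sqrt n / Real.sqrt k :=
      Real.sqrt_div (le_of_lt hn0) _
    have hsn : Real.sqrt (n:ℝ) * Real.sqrt (n:ℝ) = (n:ℝ) :=
      Real.mul_self_sqrt (le_of_lt hn0)
    have hsn0 : (0:ℝ) < Real.sqrt n := Real.sqrt_pos.2 hn0
    have hsk0 : (0:ℝ) < Real.sqrt k := Real.sqrt_pos.2 hk0
    rw [hεdef, hsk, hsd]
    field_simp
    nlinarith [hsn]
  -- pointwise discrepancy bound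
  have key : ∀ t : ℝ, t ∈ Set.Icc (0:ℝ) 1 →
      |(1 / n : ℝ) * (Finset.univ.filter (fun i => xt i ≤ t)).card - t| < ε := by
    intro t ht
    refine lt_of_le_of_lt ?_ hdisc
    have hbdd : BddAbove (Set.range fun t : Set.Icc (0:ℝ) 1 =>
        |(1 / n : ℝ) * (Finset.univ.filter (fun i => xt i ≤ (t : ℝ))).card - (t : ℝ)|) := by
      refine ⟨2, ?_⟩
      rintro v ⟨s, rfl⟩
      have hc : ((Finset.univ.filter (fun i => xt i ≤ (s:ℝ))).card : ℝ) ≤ n := by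
        exact_mod_cast (Finset.card_filter_le _ _).trans_eq (Finset.card_univ.trans (Fintype.card_fin n))
      have hs0 := s.2.1
      have hs1 := s.2.2
      have hcn : (0:ℝ) ≤ ((Finset.univ.filter (fun i => xt i ≤ (s:ℝ))).card : ℝ) := by positivity
      have h1 : (1/(n:ℝ)) * ((Finset.univ.filter (fun i => xt i ≤ (s:ℝ))).card : ℝ) ≤ 1 := by
        rw [one_div, inv_mul_le_iff₀ hn0]; linarith
      have h2 : (0:ℝ) ≤ (1/(n:ℝ)) * ((Finset.univ.filter (fun i => xt i ≤ (s:ℝ))).card : ℝ) := by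
        positivity
      rw [abs_sub_le_iff]
      constructor <;> linarith
    exact le_ciSup hbdd ⟨t, ht⟩
  -- counting function bounds
  set F : ℝ → ℝ := fun t => ((Finset.univ.filter (fun i => xt i ≤ t)).card : ℝ) with hF
  have hFlow : ∀ t ∈ Set.Icc (0:ℝ) 1, (n:ℝ) * (t - ε) < F t := by
    intro t ht
    have h := (abs_lt.1 (key t ht)).1
    have h1 : t - ε < F t / n := by
      have : (1/(n:ℝ)) * F t = F t / n := by ring
      rw [hF]; simp only; nlinarith [h, this]
    rw [lt_div_iff₀ hn0] at h1
    nlinarith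
  have hFhigh : ∀ t ∈ Set.Icc (0:ℝ) 1, F t < (n:ℝ) * (t + ε) := by
    intro t ht
    have h := (abs_lt.1 (key t ht)).2
    have h1 : F t / n < t + ε := by
      have : (1/(n:ℝ)) * F t = F t / n := by ring
      rw [hF]; simp only; nlinarith [h, this]
    rw [div_lt_iff₀ hn0] at h1
    nlinarith
  have hb1 : ∀ j : Fin k, ((j:ℝ)+1)/k ≤ 1 := by
    intro j
    rw [div_le_one hk0]
    have : (j:ℕ) + 1 ≤ k := j.2
    exact_mod_cast this
  -- bound on number of xt in each interval
  have hd : ∀ j : Fin k,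
      ((Finset.univ.filter (fun i => xt i ∈ Set.Ico ((j:ℝ)/k) (((j:ℝ)+1)/k))).card : ℝ)
        ≤ (n:ℝ)/k + Real.sqrt ((n:ℝ)/k) / 2 := by
    intro j
    set D := Finset.univ.filter (fun i => xt i ∈ Set.Ico ((j:ℝ)/k) (((j:ℝ)+1)/k)) with hD
    have hbmem : ((j:ℝ)+1)/k ∈ Set.Icc (0:ℝ) 1 := ⟨by positivity, hb1 j⟩
    have hDsub : D ⊆ Finset.univ.filter (fun i => xt i ≤ ((j:ℝ)+1)/k) := by
      intro i hi
      simp only [hD, Finset.mem_filter, Set.mem_Ico] at hi ⊢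
      exact ⟨hi.1, hi.2.2.le⟩
    have h1 : (D.card : ℝ) ≤ F (((j:ℝ)+1)/k) :=
      Nat.cast_le.mpr (Finset.card_le_card hDsub)
    have h2 := hFhigh _ hbmem
    refine le_of_forall_pos_le_add ?_
    intro η hη
    by_cases hj0 : (j:ℕ) = 0
    · have hj0' : ((j:ℕ):ℝ) = 0 := by exact_mod_cast hj0
      rw [hj0'] at h1 h2
      have hb2 : (n:ℝ) * ((0+1)/(k:ℝ) + ε) = (n:ℝ)/k + (n:ℝ)*ε := by ring
      have hne : (n:ℝ)*ε = Real.sqrt ((n:ℝ)/k)/4 := by linarith [h2ne]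
      linarith [h1, h2, hb2, hne, hsq0, hη]
    · -- left endpoint positive
      have haj : (0:ℝ) < (j:ℝ)/k := by
        have : (0:ℝ) < (j:ℝ) := by exact_mod_cast Nat.pos_of_ne_zero hj0
        positivity
      set δ : ℝ := min ((j:ℝ)/k) (η/n) with hδdef
      have hδ0 : 0 < δ := lt_min haj (by positivity)
      set t : ℝ := (j:ℝ)/k - δ with htdef
      have hδa : δ ≤ (j:ℝ)/k := min_le_left _ _
      have ht0 : 0 ≤ t := by simp only [htdef]; linarith
      have hta : t < (j:ℝ)/k := by simp only [htdef]; linarith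
      have hab : (j:ℝ)/k ≤ ((j:ℝ)+1)/k := (div_le_div_iff_of_pos_right hk0).2 (by linarith)
      have htmem : t ∈ Set.Icc (0:ℝ) 1 :=
        ⟨ht0, le_trans (le_of_lt hta) (le_trans hab (hb1 j))⟩
      set T := Finset.univ.filter (fun i => xt i ≤ t) with hT
      have hdisj : Disjoint D T := by
        rw [Finset.disjoint_left]
        intro i hiD hiT
        simp only [hD, Finset.mem_filter, Set.mem_Ico] at hiD
        simp only [hT, Finset.mem_filter] at hiT
        exact absurd hiD.2.1 (not_le.2 (lt_of_le_of_lt hiT.2 hta))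
      have hUsub : D ∪ T ⊆ Finset.univ.filter (fun i => xt i ≤ ((j:ℝ)+1)/k) := by
        intro i hi
        rcases Finset.mem_union.1 hi with hi | hi
        · exact hDsub hi
        · simp only [hT, Finset.mem_filter] at hi
          simp only [Finset.mem_filter]
          exact ⟨hi.1, le_trans hi.2 (le_trans (le_of_lt hta) hab)⟩
      have hcards : (D.card : ℝ) + T.card ≤ F (((j:ℝ)+1)/k) := by
        have h0 := Finset.card_le_card hUsub
        rw [Finset.card_union_of_disjoint hdisj] at h0
        have h0' : ((D.card + T.card : ℕ) : ℝ) ≤ F (((j:ℝ)+1)/k) := Nat.cast_le.mpr h0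
        push_cast at h0'
        exact h0'
      have h3 := hFlow t htmem
      have hTF : (T.card : ℝ) = F t := rfl
      have hnδ : (n:ℝ) * δ ≤ η := by
        calc (n:ℝ) * δ ≤ (n:ℝ) * (η/n) := by
              have : δ ≤ η/n := min_le_right _ _
              nlinarith
          _ = η := by field_simp
      have hba : ((j:ℝ)+1)/k - (j:ℝ)/k = 1/k := by ring
      have hex : (n:ℝ) * (((j:ℝ)+1)/k + ε) - (n:ℝ) * (t - ε)
          = (n:ℝ)/k + (n:ℝ)*δ + 2*(n:ℝ)*ε := by
        rw [htdef]; field_simp; ring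
      clear_value T t δ D
      have hstep : (D.card : ℝ) ≤ (n:ℝ)/k + (n:ℝ)*δ + 2*(n:ℝ)*ε := by
        linarith [hcards, hTF, h2, h3, hex]
      linarith [hstep, hnδ, h2ne]
  -- the moved points in each interval
  set A : Fin k → Finset (Fin n) := fun j => Finset.univ.filter
      (fun i => x i ∈ Set.Ico ((j:ℝ)/k) (((j:ℝ)+1)/k) ∧ x i ≠ xt i) with hA
  have hAj : ∀ j ∈ S, (1/2:ℝ) * Real.sqrt ((n:ℝ)/k) ≤ ((A j).card : ℝ) := by
    intro j hj
    rw [hS, Finset.mem_filter] at hj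
    have hc := hj.2
    have hsplit : ((Finset.univ.filter (fun i =>
        x i ∈ Set.Ico ((j:ℝ)/k) (((j:ℝ)+1)/k))).card : ℝ)
        ≤ ((A j).card : ℝ) + ((Finset.univ.filter (fun i =>
            xt i ∈ Set.Ico ((j:ℝ)/k) (((j:ℝ)+1)/k))).card : ℝ) := by
      have hsub : Finset.univ.filter (fun i => x i ∈ Set.Ico ((j:ℝ)/k) (((j:ℝ)+1)/k))
          ⊆ A j ∪ Finset.univ.filter (fun i => xt i ∈ Set.Ico ((j:ℝ)/k) (((j:ℝ)+1)/k)) := by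
        intro i hi
        simp only [Finset.mem_filter] at hi
        by_cases hxi : x i = xt i
        · refine Finset.mem_union_right _ ?_
          simp only [Finset.mem_filter]
          exact ⟨hi.1, hxi ▸ hi.2⟩
        · refine Finset.mem_union_left _ ?_
          simp only [hA, Finset.mem_filter]
          exact ⟨hi.1, hi.2, hxi⟩
      have := (Finset.card_le_card hsub).trans (Finset.card_union_le _ _)
      exact_mod_cast this
    have hdj := hd j
    linarith
  have hdisjA : ∀ j1 ∈ S, ∀ j2 ∈ S, j1 ≠ j2 → Disjoint (A j1) (A j2) := by
    intro j1 _ j2 _ hne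
    rw [Finset.disjoint_left]
    intro i h1 h2
    simp only [hA, Finset.mem_filter, Set.mem_Ico] at h1 h2
    apply hne
    have e1 : ((j1:ℕ):ℝ) < ((j2:ℕ):ℝ) + 1 :=
      (div_lt_div_iff_of_pos_right hk0).1 (lt_of_le_of_lt h1.2.1.1 h2.2.1.2)
    have e2 : ((j2:ℕ):ℝ) < ((j1:ℕ):ℝ) + 1 :=
      (div_lt_div_iff_of_pos_right hk0).1 (lt_of_le_of_lt h2.2.1.1 h1.2.1.2)
    have e1' : (j1:ℕ) < (j2:ℕ) + 1 := by exact_mod_cast e1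
    have e2' : (j2:ℕ) < (j1:ℕ) + 1 := by exact_mod_cast e2
    exact Fin.ext (by omega)
  have hsum : ∑ j ∈ S, ((A j).card : ℝ)
      ≤ ((Finset.univ.filter (fun i => x i ≠ xt i)).card : ℝ) := by
    have h1 : (S.biUnion A).card = ∑ j ∈ S, (A j).card := Finset.card_biUnion hdisjA
    have h2 : S.biUnion A ⊆ Finset.univ.filter (fun i => x i ≠ xt i) := by
      intro i hi
      rcases Finset.mem_biUnion.1 hi with ⟨j, _, hij⟩
      simp only [hA, Finset.mem_filter] at hij
      simp only [Finset.mem_filter]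
      exact ⟨hij.1, hij.2.2⟩
    have := Finset.card_le_card h2
    rw [h1] at this
    exact_mod_cast this
  calc (1 / 2 : ℝ) * Real.sqrt ((n:ℝ)/k) * S.card
      = ∑ _j ∈ S, (1/2:ℝ) * Real.sqrt ((n:ℝ)/k) := by
        rw [Finset.sum_const, nsmul_eq_mul]; ring
    _ ≤ ∑ j ∈ S, ((A j).card : ℝ) := Finset.sum_le_sum hAj
    _ ≤ _ := hsum
end
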